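/- arXiv:2001.00250 — 2 statements merged into one kernel-verified Lean document; each statement's English description precedes it below -/
import Mathlib

section
/- The set of smooth compactly supported complex-valued functions on ℝ whose support is contained in (0,∞) is dense, with respect to the topology of the Schwartz space 𝒮(ℝ), in the closed subspace {φ ∈ 𝒮(ℝ) : φ(x) = 0 for all x ≤ 0}. Equivalently, every Schwartz function vanishing on (−∞,0] is the limit in every Schwartz seminorm of smooth functions compactly supported in (0,∞). -/
/-!
Two cutoffs, combined through `closure (closure s) = closure s`.

Multiplying by `1 - smoothTransition (x - R)` truncates at infinity: the error is supported in
`x ≥ R`, where one extra power of `‖x‖` from the decay of a Schwartz function gains a factor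
`1 / R` in every seminorm.

Multiplying by `1 - smoothTransition (2 - c * x)` moves the support away from `0`: the error is
supported in `[0, 2 / c]`, where the `i`-th derivative of the cutoff is `O(c ^ i)`. Since `φ`
vanishes on `(-∞, 0]`, all its derivatives vanish at `0`, so by the mean value theorem its
derivatives of order `≤ m` are `O(x ^ (m + 1))` near `0`, and the product is `O(1 / c)`.
-/

open Real Filter Topology Set Finset SchwartzMap
open scoped ContDiff SchwartzMap

theorem exists_forall_le_of_monotone {P : ℕ → ℝ → Prop} (hP : ∀ j, Monotone (P j))
    (h : ∀ j, ∃ C, P j C) (m : ℕ) : ∃ C, ∀ j ≤ m, P j C := by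
  choose C hC using h
  obtain ⟨M, hM⟩ := ((Finset.range (m + 1)).image C).exists_le
  exact ⟨M, fun j hj => hP j (hM _ (mem_image_of_mem _ (mem_range.2 (by omega)))) (hC j)⟩

section Leibniz

variable {𝕜 E F : Type*} [NontriviallyNormedField 𝕜] [NormedAddCommGroup E] [NormedSpace 𝕜 E]
  [NormedAddCommGroup F] [NormedSpace 𝕜 F]

theorem norm_pow_mul_norm_iteratedFDeriv_smul_le {f : E → 𝕜} {g : E → F} {n : ℕ}
    (hf : ContDiff 𝕜 n f) (hg : ContDiff 𝕜 n g) (x : E) (k : ℕ) {A : ℝ}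
    (hA : ∀ i ≤ n, ‖iteratedFDeriv 𝕜 i f x‖ * (‖x‖ ^ k * ‖iteratedFDeriv 𝕜 (n - i) g x‖) ≤ A) :
    ‖x‖ ^ k * ‖iteratedFDeriv 𝕜 n (fun y => f y • g y) x‖ ≤ 2 ^ n * A := by
  calc ‖x‖ ^ k * ‖iteratedFDeriv 𝕜 n (fun y => f y • g y) x‖
      ≤ ‖x‖ ^ k * ∑ i ∈ range (n + 1),
          n.choose i * ‖iteratedFDeriv 𝕜 i f x‖ * ‖iteratedFDeriv 𝕜 (n - i) g x‖ := by
        gcongr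
        exact norm_iteratedFDeriv_smul_le hf hg x le_rfl
    _ = ∑ i ∈ range (n + 1), n.choose i *
          (‖iteratedFDeriv 𝕜 i f x‖ * (‖x‖ ^ k * ‖iteratedFDeriv 𝕜 (n - i) g x‖)) := by
        rw [mul_sum]
        exact sum_congr rfl fun i _ => by ring
    _ ≤ ∑ i ∈ range (n + 1), n.choose i * A := by
        gcongr with i hi
        exact hA i (Nat.lt_succ_iff.1 (mem_range.1 hi))
    _ = 2 ^ n * A := by
        rw [← sum_mul, ← Nat.cast_sum, Nat.sum_range_choose, Nat.cast_pow, Nat.cast_ofNat]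

theorem iteratedDeriv_comp_mul_add {f : 𝕜 → F} {n : ℕ} (hf : ContDiff 𝕜 n f) (a b x : 𝕜) :
    iteratedDeriv n (fun y => f (a * y + b)) x = a ^ n • iteratedDeriv n f (a * x + b) := by
  have hfb : ContDiff 𝕜 n fun z => f (z + b) := hf.comp (contDiff_id.add contDiff_const)
  rw [iteratedDeriv_comp_const_smul hfb a, iteratedDeriv_comp_add_const]

end Leibniz

section Flat

variable {F : Type*} [NormedAddCommGroup F] [NormedSpace ℝ F]

theorem iteratedDeriv_eq_zero_of_forall_le_eq_zero {f : ℝ → F} {a : ℝ} {n : ℕ}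
    (hf : ContDiff ℝ n f) (h : ∀ x ≤ a, f x = 0) {x : ℝ} (hx : x ≤ a) :
    iteratedDeriv n f x = 0 := by
  have h_open : EqOn (iteratedDeriv n f) 0 (Iio a) := by
    have hEq : EqOn f 0 (Iio a) := fun y hy => h y (le_of_lt hy)
    exact fun y hy => (hEq.iteratedDeriv_of_isOpen isOpen_Iio n hy).trans (by simp)
  have := h_open.closure (hf.continuous_iteratedDeriv n le_rfl) continuous_const
  rw [closure_Iio] at this
  exact this hx

theorem exists_forall_norm_iteratedDeriv_le_mul_pow {f : ℝ → F} (hf : ContDiff ℝ ∞ f)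
    (h0 : ∀ n, iteratedDeriv n f 0 = 0) (M : ℕ) :
    ∀ j, ∃ C, ∀ x ∈ Icc (0 : ℝ) 1, ‖iteratedDeriv j f x‖ ≤ C * x ^ M := by
  induction M with
  | zero =>
    intro j
    obtain ⟨C, hC⟩ := isCompact_Icc.exists_bound_of_continuousOn
      (hf.continuous_iteratedDeriv j (mod_cast le_top)).continuousOn
    exact ⟨C, fun x hx => by simpa using hC x hx⟩
  | succ M ih =>
    intro j
    obtain ⟨C, hC⟩ := ih (j + 1)
    refine ⟨C, fun x hx => ?_⟩
    have hC0 : 0 ≤ C := by simpa using (norm_nonneg _).trans (hC 1 (right_mem_Icc.2 zero_le_one))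
    have hderiv : ∀ t ∈ Icc 0 x, HasDerivWithinAt (iteratedDeriv j f)
        (iteratedDeriv (j + 1) f t) (Icc 0 x) t := fun t _ => by
      rw [iteratedDeriv_succ]
      exact ((hf.differentiable_iteratedDeriv j (mod_cast WithTop.coe_lt_top _)) t)
        |>.hasDerivAt.hasDerivWithinAt
    have hbound : ∀ t ∈ Ico 0 x, ‖iteratedDeriv (j + 1) f t‖ ≤ C * x ^ M := fun t ht =>
      (hC t ⟨ht.1, ht.2.le.trans hx.2⟩).trans (by gcongr; exacts [ht.1, ht.2.le])
    have := norm_image_sub_le_of_norm_deriv_le_segment' hderiv hbound x (right_mem_Icc.2 hx.1)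
    rw [h0, sub_zero, sub_zero] at this
    exact this.trans_eq (by ring)

end Flat

namespace Real.smoothTransition

theorem bddAbove_range_norm_iteratedDeriv (n : ℕ) :
    BddAbove (range fun x => ‖iteratedDeriv n smoothTransition x‖) := by
  cases n with
  | zero => exact ⟨1, by rintro _ ⟨x, rfl⟩; simpa [abs_of_nonneg (nonneg x)] using le_one x⟩
  | succ n =>
    refine ((smoothTransition.contDiff (n := n + 1)).continuous_iteratedDeriv _ le_rfl).norm
      |>.bddAbove_range_of_hasCompactSupport (HasCompactSupport.norm ?_)
    refine HasCompactSupport.intro (isCompact_Icc (a := 0) (b := 1)) fun x hx => ?_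
    obtain ⟨c, hc⟩ : ∃ c : ℝ, smoothTransition =ᶠ[𝓝 x] fun _ => c := by
      rcases not_and_or.1 hx with hx | hx
      · exact ⟨0, eventually_of_mem (Iio_mem_nhds (not_le.1 hx)) fun y hy =>
          zero_of_nonpos (le_of_lt hy)⟩
      · exact ⟨1, eventually_of_mem (Ioi_mem_nhds (not_le.1 hx)) fun y hy =>
          one_of_one_le (le_of_lt hy)⟩
    rw [hc.iteratedDeriv_eq, iteratedDeriv_const, if_neg n.succ_ne_zero]

theorem exists_forall_norm_iteratedDeriv_le (m : ℕ) :
    ∃ B, ∀ i ≤ m, ∀ x, ‖iteratedDeriv i smoothTransition x‖ ≤ B :=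
  exists_forall_le_of_monotone
    (P := fun i B => ∀ x, ‖iteratedDeriv i smoothTransition x‖ ≤ B)
    (fun _ _ _ hBB' h x => (h x).trans hBB')
    (fun i => (bddAbove_range_norm_iteratedDeriv i).imp fun _ hB x => hB (mem_range_self x)) m

@[fun_prop]
theorem hasTemperateGrowth : smoothTransition.HasTemperateGrowth := by
  refine ⟨smoothTransition.contDiff, fun n => ?_⟩
  obtain ⟨B, hB⟩ := exists_forall_norm_iteratedDeriv_le n
  exact ⟨0, B, fun x => by simpa [norm_iteratedFDeriv_eq_norm_iteratedDeriv] using hB n le_rfl x⟩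

end Real.smoothTransition

section Schwartz

variable {E F : Type*} [NormedAddCommGroup E] [NormedSpace ℝ E] [NormedAddCommGroup F]
  [NormedSpace ℝ F]

theorem SchwartzMap.tendsto_nhds_of_norm_pow_mul_le {ι : Type*} {l : Filter ι}
    {f : ι → 𝓢(E, F)} {g : 𝓢(E, F)} {r : ι → ℝ} (hr : Tendsto r l (𝓝 0))
    (h : ∀ k n : ℕ, ∃ K, ∀ᶠ i in l, ∀ x, ‖x‖ ^ k * ‖iteratedFDeriv ℝ n ⇑(f i - g) x‖ ≤ K * r i) :
    Tendsto f l (𝓝 g) := by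
  rw [(schwartz_withSeminorms ℝ E F).tendsto_nhds f g]
  rintro ⟨k, n⟩ ε hε
  obtain ⟨K, hK⟩ := h k n
  have hKr : Tendsto (fun i => K * r i) l (𝓝 0) := by simpa using hr.const_mul K
  filter_upwards [hK, hKr.eventually (gt_mem_nhds hε)] with i hi hiε
  have hKr0 : 0 ≤ K * r i := (mul_nonneg (by positivity) (norm_nonneg _)).trans (hi 0)
  exact (seminorm_le_bound ℝ k n _ hKr0 hi).trans_lt hiε

theorem SchwartzMap.coe_smulLeftCLM_one_sub_sub_self {g : E → ℝ}
    (hg : (fun x => 1 - g x).HasTemperateGrowth) (f : 𝓢(E, F)) :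
    ⇑(smulLeftCLM F (fun x => 1 - g x) f - f) = -fun x => g x • f x := by
  ext x
  simp [smulLeftCLM_apply_apply hg, sub_smul]

end Schwartz

section Cutoff

variable {F : Type*} [NormedAddCommGroup F] [NormedSpace ℝ F]

theorem norm_pow_mul_norm_iteratedFDeriv_smoothTransition_smul_le {f : ℝ → F}
    (hf : ContDiff ℝ ∞ f) {a b A B : ℝ} {k m : ℕ}
    (hB : ∀ i ≤ m, ∀ y, ‖iteratedDeriv i smoothTransition y‖ ≤ B) (hA0 : 0 ≤ A) {x : ℝ}
    (hA : 0 < a * x + b → ∀ i ≤ m, |a| ^ i * B * (‖x‖ ^ k * ‖iteratedFDeriv ℝ (m - i) f x‖) ≤ A) :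
    ‖x‖ ^ k * ‖iteratedFDeriv ℝ m (fun y => smoothTransition (a * y + b) • f y) x‖ ≤ 2 ^ m * A := by
  refine norm_pow_mul_norm_iteratedFDeriv_smul_le (f := fun y => smoothTransition (a * y + b))
    (smoothTransition.contDiff.comp (by fun_prop)) (hf.of_le (mod_cast le_top)) x k fun i hi => ?_
  rw [norm_iteratedFDeriv_eq_norm_iteratedDeriv,
    iteratedDeriv_comp_mul_add (f := smoothTransition) smoothTransition.contDiff, norm_smul,
    norm_pow, norm_eq_abs]
  rcases le_or_gt (a * x + b) 0 with hx | hx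
  · rw [iteratedDeriv_eq_zero_of_forall_le_eq_zero smoothTransition.contDiff
      (fun _ => smoothTransition.zero_of_nonpos) hx]
    simpa using hA0
  · refine le_trans ?_ (hA hx i hi)
    gcongr
    exact hB i hi _

theorem tendsto_smulLeftCLM_one_sub_smoothTransition_sub_atTop (f : 𝓢(ℝ, F)) :
    Tendsto (fun R : ℝ => smulLeftCLM F (fun x => 1 - smoothTransition (x - R)) f) atTop
      (𝓝 f) := by
  refine tendsto_nhds_of_norm_pow_mul_le tendsto_inv_atTop_zero fun k m => ?_
  obtain ⟨B, hB⟩ := smoothTransition.exists_forall_norm_iteratedDeriv_le m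
  obtain ⟨S, hS⟩ := exists_forall_le_of_monotone
    (P := fun j S => ∀ x : ℝ, ‖x‖ ^ (k + 1) * ‖iteratedFDeriv ℝ j f x‖ ≤ S)
    (fun _ _ _ hSS' h x => (h x).trans hSS') (fun j => ⟨_, le_seminorm ℝ (k + 1) j f⟩) m
  have hB0 : 0 ≤ B := (norm_nonneg _).trans (hB 0 (Nat.zero_le _) 0)
  have hS0 : 0 ≤ S := (mul_nonneg (by positivity) (norm_nonneg _)).trans (hS 0 (Nat.zero_le _) 0)
  refine ⟨2 ^ m * (B * S), ?_⟩
  filter_upwards [eventually_gt_atTop 0] with R hR x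
  rw [coe_smulLeftCLM_one_sub_sub_self (by fun_prop), iteratedFDeriv_neg_apply, norm_neg]
  have key := norm_pow_mul_norm_iteratedFDeriv_smoothTransition_smul_le (a := 1) (b := -R)
    (A := B * S * R⁻¹) (k := k) (f.smooth ⊤) hB (by positivity) (x := x) fun hx i hi => by
      have hRx : R ≤ ‖x‖ := by rw [norm_eq_abs]; linarith [le_abs_self x]
      have hdecay : ‖x‖ ^ k * ‖iteratedFDeriv ℝ (m - i) f x‖ ≤ S * R⁻¹ := by
        rw [← div_eq_mul_inv, le_div_iff₀ hR]
        calc ‖x‖ ^ k * ‖iteratedFDeriv ℝ (m - i) f x‖ * R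
            ≤ ‖x‖ ^ k * ‖iteratedFDeriv ℝ (m - i) f x‖ * ‖x‖ := by gcongr
          _ = ‖x‖ ^ (k + 1) * ‖iteratedFDeriv ℝ (m - i) f x‖ := by ring
          _ ≤ S := hS _ (Nat.sub_le m i) x
      rw [abs_one, one_pow, one_mul, mul_assoc]
      gcongr
  simp only [one_mul, ← sub_eq_add_neg] at key
  exact key.trans_eq (by ring)

theorem tendsto_smulLeftCLM_one_sub_smoothTransition_two_sub_mul_atTop (f : 𝓢(ℝ, F))
    (hf : ∀ x ≤ 0, f x = 0) :
    Tendsto (fun c : ℝ => smulLeftCLM F (fun x => 1 - smoothTransition (2 - c * x)) f) atTop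
      (𝓝 f) := by
  have hflat (j : ℕ) {x : ℝ} (hx : x ≤ 0) : iteratedDeriv j f x = 0 :=
    iteratedDeriv_eq_zero_of_forall_le_eq_zero (f.smooth j) hf hx
  refine tendsto_nhds_of_norm_pow_mul_le tendsto_inv_atTop_zero fun k m => ?_
  obtain ⟨B, hB⟩ := smoothTransition.exists_forall_norm_iteratedDeriv_le m
  obtain ⟨C, hC⟩ := exists_forall_le_of_monotone
    (P := fun j C => ∀ x ∈ Icc (0 : ℝ) 1, ‖iteratedDeriv j f x‖ ≤ C * x ^ (m + 1))
    (fun _ _ _ hCC' h x hx => (h x hx).trans (by gcongr; exact pow_nonneg hx.1 _))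
    (exists_forall_norm_iteratedDeriv_le_mul_pow (f.smooth ⊤) (fun n => hflat n le_rfl) (m + 1)) m
  have hB0 : 0 ≤ B := (norm_nonneg _).trans (hB 0 (Nat.zero_le _) 0)
  have hC0 : 0 ≤ C := by
    simpa using (norm_nonneg _).trans (hC 0 (Nat.zero_le _) 1 (right_mem_Icc.2 zero_le_one))
  refine ⟨2 ^ m * (B * C * 2 ^ (m + 1)), ?_⟩
  filter_upwards [eventually_ge_atTop 2] with c hc x
  have hc0 : 0 < c := by linarith
  rw [coe_smulLeftCLM_one_sub_sub_self (by fun_prop), iteratedFDeriv_neg_apply, norm_neg]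
  have key := norm_pow_mul_norm_iteratedFDeriv_smoothTransition_smul_le (a := -c) (b := 2)
    (A := B * C * 2 ^ (m + 1) * c⁻¹) (k := k) (f.smooth ⊤) hB (by positivity) (x := x)
    fun hx i hi => by
      rw [norm_iteratedFDeriv_eq_norm_iteratedDeriv, abs_neg, abs_of_pos hc0]
      rcases le_or_gt x 0 with hx0 | hx0
      · rw [hflat _ hx0, norm_zero, mul_zero, mul_zero]
        positivity
      have hx2 : x ≤ 2 / c := by rw [le_div_iff₀ hc0]; linarith
      have hx1 : x ≤ 1 := hx2.trans ((div_le_one hc0).2 hc)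
      -- the cutoff costs `c ^ i`, the flatness of `f` at `0` pays `(2 / c) ^ (m + 1)`
      have hscale : c ^ i * x ^ (m + 1) ≤ 2 ^ (m + 1) * c⁻¹ :=
        calc c ^ i * x ^ (m + 1) ≤ c ^ m * (2 / c) ^ (m + 1) := by
              gcongr
              linarith
          _ = 2 ^ (m + 1) * c⁻¹ := by rw [div_pow, pow_succ c m]; field_simp
      calc c ^ i * B * (‖x‖ ^ k * ‖iteratedDeriv (m - i) f x‖)
          ≤ c ^ i * B * (1 * (C * x ^ (m + 1))) := by
            gcongr
            · exact pow_le_one₀ (norm_nonneg x) (by rw [norm_eq_abs, abs_of_pos hx0]; exact hx1)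
            · exact hC _ (Nat.sub_le m i) x ⟨hx0.le, hx1⟩
        _ = B * C * (c ^ i * x ^ (m + 1)) := by ring
        _ ≤ B * C * (2 ^ (m + 1) * c⁻¹) := by gcongr
        _ = B * C * 2 ^ (m + 1) * c⁻¹ := by ring
  have hrw : ∀ y, -c * y + 2 = 2 - c * y := fun y => by ring
  simp only [hrw] at key
  exact key.trans_eq (by ring)

theorem smulLeftCLM_one_sub_smoothTransition_two_sub_mul_apply_of_lt (f : 𝓢(ℝ, F)) {c x : ℝ}
    (hc : 0 < c) (hx : x < 1 / c) :
    smulLeftCLM F (fun x => 1 - smoothTransition (2 - c * x)) f x = 0 := by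
  have hcx : c * x < 1 := by rw [lt_div_iff₀ hc] at hx; linarith
  rw [smulLeftCLM_apply_apply (by fun_prop), smoothTransition.one_of_one_le (by linarith),
    sub_self, zero_smul]

theorem tsupport_smulLeftCLM_one_sub_smoothTransition_sub_subset {f : 𝓢(ℝ, F)} {δ : ℝ}
    (hf : ∀ x < δ, f x = 0) (R : ℝ) :
    tsupport (smulLeftCLM F (fun x => 1 - smoothTransition (x - R)) f) ⊆ Icc δ (R + 1) := by
  refine closure_minimal (Function.support_subset_iff'.2 fun x hx => ?_) isClosed_Icc
  rw [smulLeftCLM_apply_apply (by fun_prop)]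
  rcases not_and_or.1 hx with hx | hx
  · rw [hf x (not_le.1 hx), smul_zero]
  · rw [smoothTransition.one_of_one_le (by linarith [not_le.1 hx]), sub_self, zero_smul]

end Cutoff

/-- Smooth compactly supported functions with support in `(0,∞)` are dense, in the
Schwartz topology, in the closed subspace of Schwartz functions vanishing on `(-∞,0]`. -/
theorem denseRange_compactly_supported_in_schwartz_vanishing_nonpos (φ : SchwartzMap ℝ ℂ)
    (hφ : ∀ x : ℝ, x ≤ 0 → φ x = 0) :
    φ ∈ closure {ψ : SchwartzMap ℝ ℂ |
      HasCompactSupport (⇑ψ) ∧ tsupport (⇑ψ) ⊆ Set.Ioi (0 : ℝ)} := by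
  have h_away : ∀ ψ : 𝓢(ℝ, ℂ), ∀ δ > 0, (∀ x < δ, ψ x = 0) →
      ψ ∈ closure {ψ : 𝓢(ℝ, ℂ) | HasCompactSupport ⇑ψ ∧ tsupport ⇑ψ ⊆ Ioi 0} := by
    intro ψ δ hδ hψ
    refine mem_closure_of_tendsto (tendsto_smulLeftCLM_one_sub_smoothTransition_sub_atTop ψ)
      (Eventually.of_forall fun R => ?_)
    have hsupp := tsupport_smulLeftCLM_one_sub_smoothTransition_sub_subset hψ R
    exact ⟨isCompact_Icc.of_isClosed_subset (isClosed_tsupport _) hsupp,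
      hsupp.trans fun x hx => hδ.trans_le hx.1⟩
  refine isClosed_closure.mem_of_tendsto
    (tendsto_smulLeftCLM_one_sub_smoothTransition_two_sub_mul_atTop φ hφ)
    ((eventually_gt_atTop 0).mono fun c hc => h_away _ (1 / c) (by positivity) fun x hx => ?_)
  exact smulLeftCLM_one_sub_smoothTransition_two_sub_mul_apply_of_lt φ hc hx
end

section
/- For every complex-valued Schwartz function φ on ℝ with φ(x) = 0 for all x ≤ 0, the function y ↦ φ((y + √(y² + 4))/2) is a Schwartz function on ℝ. -/
/-!
Write `τ` for the inverse of `σ t = t - t⁻¹ : (0, ∞) → ℝ`. Since `τ' = 1 / σ'(τ) = g ∘ τ` with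
`g t = t² / (1 + t²)`, the chain rule gives `(ψ ∘ τ)' = (g • ψ') ∘ τ`, and `ψ ↦ g • ψ'` maps Schwartz
functions vanishing on `(-∞, 0]` to Schwartz functions of the same kind. So every derivative of
`φ ∘ τ` is `ψ ∘ τ` for such a `ψ`, and it remains to bound `|y| ^ k ‖ψ (τ y)‖`. As `y = τ - τ⁻¹`, `|y|`
is at most `τ` or `τ⁻¹`: the first case is the decay of `ψ` at infinity, the second the flatness
`‖ψ t‖ = O(t ^ k)` at `0` of a Schwartz function vanishing on `(-∞, 0]`.
-/

open SchwartzMap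
open scoped ContDiff

noncomputable section

variable {F : Type*} [NormedAddCommGroup F] [NormedSpace ℝ F]

def invChart (y : ℝ) : ℝ := (y + Real.sqrt (y ^ 2 + 4)) / 2

lemma sq_sqrt_sq_add_four (y : ℝ) : Real.sqrt (y ^ 2 + 4) ^ 2 = y ^ 2 + 4 :=
  Real.sq_sqrt (by positivity)

lemma invChart_pos (y : ℝ) : 0 < invChart y := by
  have := sq_sqrt_sq_add_four y
  have := Real.sqrt_nonneg (y ^ 2 + 4)
  unfold invChart
  nlinarith

lemma invChart_sub_inv (y : ℝ) : invChart y - (invChart y)⁻¹ = y := by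
  have hinv : (invChart y)⁻¹ = (Real.sqrt (y ^ 2 + 4) - y) / 2 := by
    rw [inv_eq_of_mul_eq_one_right]
    unfold invChart
    nlinarith [sq_sqrt_sq_add_four y]
  rw [hinv, invChart]
  ring

lemma abs_le_invChart_or_abs_le_inv (y : ℝ) : |y| ≤ invChart y ∨ |y| ≤ (invChart y)⁻¹ := by
  have hpos := invChart_pos y
  have hinv := inv_pos.2 hpos
  have hy := invChart_sub_inv y
  generalize invChart y = t at hpos hinv hy ⊢
  subst hy
  rcases le_total t⁻¹ t with h | h
  · left; rw [abs_of_nonneg (by linarith)]; linarith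
  · right; rw [abs_of_nonpos (by linarith)]; linarith

lemma contDiff_invChart : ContDiff ℝ ∞ invChart :=
  (contDiff_id.add (contDiff_iff_contDiffAt.2 fun y =>
    (by fun_prop : ContDiffAt ℝ ∞ (fun y : ℝ => y ^ 2 + 4) y).sqrt (by positivity))).div_const 2

lemma hasDerivAt_invChart (y : ℝ) :
    HasDerivAt invChart (1 - (1 + invChart y ^ 2)⁻¹) y := by
  have hpos := (invChart_pos y).ne'
  have hσ : HasDerivAt (fun t : ℝ => t - t⁻¹) (1 + (invChart y ^ 2)⁻¹) (invChart y) := by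
    simpa using (hasDerivAt_id' _).fun_sub (hasDerivAt_inv hpos)
  have hσ' : 1 + (invChart y ^ 2)⁻¹ ≠ 0 := by positivity
  refine (hσ.of_local_left_inverse contDiff_invChart.continuous.continuousAt hσ'
    (.of_forall invChart_sub_inv)).congr_deriv ?_
  have h1 : 1 + invChart y ^ 2 ≠ 0 := by positivity
  rw [inv_eq_one_div, inv_eq_one_div, inv_eq_one_div]
  field_simp
  ring

/-- The multiplier is `t² / (1 + t²)`, written so that `fun_prop` sees its temperate growth. -/
def chartDerivCLM : 𝓢(ℝ, F) →L[ℝ] 𝓢(ℝ, F) :=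
  smulLeftCLM F (fun t : ℝ => 1 - (1 + ‖t‖ ^ 2) ^ (-1 : ℝ)) ∘L derivCLM ℝ F

lemma chartDerivCLM_apply (ψ : 𝓢(ℝ, F)) (t : ℝ) :
    chartDerivCLM ψ t = (1 - (1 + t ^ 2)⁻¹) • deriv ψ t := by
  rw [chartDerivCLM, ContinuousLinearMap.comp_apply, smulLeftCLM_apply_apply (by fun_prop),
    derivCLM_apply, Real.norm_eq_abs, sq_abs, Real.rpow_neg_one]

lemma deriv_comp_invChart (ψ : 𝓢(ℝ, F)) :
    deriv (ψ ∘ invChart) = chartDerivCLM ψ ∘ invChart := by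
  funext y
  rw [((ψ.differentiableAt.hasDerivAt).scomp y (hasDerivAt_invChart y)).deriv,
    Function.comp_apply, chartDerivCLM_apply]

lemma iteratedDeriv_comp_invChart (n : ℕ) (ψ : 𝓢(ℝ, F)) :
    iteratedDeriv n (ψ ∘ invChart) = (chartDerivCLM^[n] ψ) ∘ invChart := by
  induction n generalizing ψ with
  | zero => rfl
  | succ n ih =>
    rw [iteratedDeriv_succ', deriv_comp_invChart, ih, Function.iterate_succ_apply]

lemma deriv_eq_zero_of_forall_le_eq_zero {f : ℝ → F} {a x : ℝ} (hf : DifferentiableAt ℝ f x)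
    (h : ∀ t ≤ a, f t = 0) (hx : x ≤ a) : deriv f x = 0 := by
  rw [← hf.derivWithin (uniqueDiffOn_Iic a x hx),
    derivWithin_congr (f := fun _ => (0 : F)) (s := Set.Iic a) (fun t ht => h t ht) (h x hx)]
  simp

lemma iterate_chartDerivCLM_eq_zero_of_nonpos {ψ : 𝓢(ℝ, F)} (hψ : ∀ x ≤ 0, ψ x = 0) (n : ℕ) :
    ∀ x ≤ 0, (chartDerivCLM^[n] ψ) x = 0 := by
  induction n with
  | zero => exact hψ
  | succ n ih =>
    intro x hx
    rw [Function.iterate_succ_apply', chartDerivCLM_apply,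
      deriv_eq_zero_of_forall_le_eq_zero (SchwartzMap.differentiableAt _) ih hx, smul_zero]

lemma exists_norm_le_mul_pow_of_eq_zero_of_nonpos {ψ : 𝓢(ℝ, F)} (hψ : ∀ x ≤ 0, ψ x = 0)
    (k : ℕ) : ∃ C, ∀ t, 0 ≤ t → ‖ψ t‖ ≤ C * t ^ k := by
  induction k generalizing ψ with
  | zero => exact ⟨SchwartzMap.seminorm ℝ 0 0 ψ, fun t _ => by simpa using norm_le_seminorm ℝ ψ t⟩
  | succ k ih =>
    obtain ⟨C, hC⟩ := ih (ψ := derivCLM ℝ F ψ) fun x hx => by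
      rw [derivCLM_apply]
      exact deriv_eq_zero_of_forall_le_eq_zero ψ.differentiableAt hψ hx
    have hC0 : 0 ≤ C := by simpa using (norm_nonneg _).trans (hC 1 zero_le_one)
    refine ⟨C, fun t ht => ?_⟩
    have hderiv : ∀ x ∈ Set.Icc 0 t, ‖deriv ψ x‖ ≤ C * t ^ k := fun x hx => by
      rw [← derivCLM_apply ℝ]
      exact (hC x hx.1).trans (by gcongr; exacts [hx.1, hx.2])
    calc ‖ψ t‖ = ‖ψ t - ψ 0‖ := by rw [hψ 0 le_rfl, sub_zero]
      _ ≤ C * t ^ k * ‖t - 0‖ :=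
        (convex_Icc 0 t).norm_image_sub_le_of_norm_deriv_le (fun x _ => ψ.differentiableAt) hderiv
          (Set.left_mem_Icc.2 ht) (Set.right_mem_Icc.2 ht)
      _ = C * t ^ (k + 1) := by rw [sub_zero, Real.norm_of_nonneg ht, pow_succ, mul_assoc]

lemma exists_abs_pow_mul_norm_comp_invChart_le {ψ : 𝓢(ℝ, F)} (hψ : ∀ x ≤ 0, ψ x = 0)
    (k : ℕ) : ∃ C, ∀ y, |y| ^ k * ‖ψ (invChart y)‖ ≤ C := by
  obtain ⟨C, hC⟩ := exists_norm_le_mul_pow_of_eq_zero_of_nonpos hψ k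
  refine ⟨max (SchwartzMap.seminorm ℝ k 0 ψ) C, fun y => ?_⟩
  have ht := invChart_pos y
  rcases abs_le_invChart_or_abs_le_inv y with hy | hy
  · calc |y| ^ k * ‖ψ (invChart y)‖ ≤ ‖invChart y‖ ^ k * ‖ψ (invChart y)‖ := by
          rw [Real.norm_of_nonneg ht.le]; gcongr
      _ ≤ max (SchwartzMap.seminorm ℝ k 0 ψ) C :=
        (norm_pow_mul_le_seminorm ℝ ψ k _).trans (le_max_left _ _)
  · calc |y| ^ k * ‖ψ (invChart y)‖ ≤ (invChart y)⁻¹ ^ k * (C * invChart y ^ k) := by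
          gcongr; exact hC _ ht.le
      _ = C := by rw [inv_pow]; field_simp
      _ ≤ max (SchwartzMap.seminorm ℝ k 0 ψ) C := le_max_right _ _

def SchwartzMap.compInvChart (ψ : 𝓢(ℝ, F)) (hψ : ∀ x ≤ 0, ψ x = 0) : 𝓢(ℝ, F) where
  toFun := ψ ∘ invChart
  smooth' := ψ.smooth'.comp contDiff_invChart
  decay' k n := by
    obtain ⟨C, hC⟩ :=
      exists_abs_pow_mul_norm_comp_invChart_le (iterate_chartDerivCLM_eq_zero_of_nonpos hψ n) k
    refine ⟨C, fun y => ?_⟩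
    rw [norm_iteratedFDeriv_eq_norm_iteratedDeriv, iteratedDeriv_comp_invChart, Real.norm_eq_abs]
    exact hC y

end

/-- For any Schwartz function `φ` on `ℝ` vanishing on `(-∞,0]`, the function
`y ↦ φ ((y + √(y² + 4)) / 2)` is a Schwartz function on `ℝ`. -/
theorem schwartz_comp_inverse_chart_of_vanishing_nonpos (φ : SchwartzMap ℝ ℂ)
    (hφ : ∀ x : ℝ, x ≤ 0 → φ x = 0) :
    ∃ Ψ : SchwartzMap ℝ ℂ, ∀ y : ℝ, Ψ y = φ ((y + Real.sqrt (y ^ 2 + 4)) / 2) :=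
  ⟨φ.compInvChart hφ, fun _ => rfl⟩
end
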